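/- Suppose at least ⌈(n−1)/3⌉ good citizens hold all ρ transaction pools, and each independently uploads 10 uniformly random pools it holds to 1 uniformly random politician (of which a fraction γ are corrupt). Then the probability that some pool among the ρ pools is not uploaded to any honest politician by any of these citizens is at most ρ·((ρ−10)/ρ + 10γ/ρ)^{⌈(n−1)/3⌉}. For ρ = 45, γ = 0.8, and n ≥ 1700, this probability is less than 2^{−30}. -/

import Mathlib

/-!
For a fixed pool, the events "citizen `j` misses it" are independent, each of probability at
most `1 - q` with `q = (10/ρ)(1-γ)`, so the pool is missed by all `m = ⌈(n-1)/3⌉` citizens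
with probability at most `(1-q)^m`; a union bound over the `ρ` pools gives `ρ (1-q)^m`, and
`1 - q` is exactly `(ρ-10)/ρ + 10γ/ρ`. For `ρ = 45`, `γ = 0.8` this is `45 (43/45)^m` with
`m ≥ 567`.
-/

open MeasureTheory ProbabilityTheory
open scoped ENNReal

namespace ProbabilityTheory

variable {Ω ι κ : Type*} [MeasurableSpace Ω] {μ : Measure Ω}

lemma measure_eq_false_le_one_sub [IsProbabilityMeasure μ] {X : Ω → Bool} (hX : Measurable X)
    {q : ℝ≥0∞} (hq : q ≤ μ {ω | X ω = true}) : μ {ω | X ω = false} ≤ 1 - q := by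
  have hcompl : {ω | X ω = false} = {ω | X ω = true}ᶜ := by ext; simp
  rw [hcompl, prob_compl_eq_one_sub (s := {ω | X ω = true})
    (hX (measurableSet_singleton true))]
  exact tsub_le_tsub_left hq 1

lemma iIndepFun.measure_forall_eq_false_le_pow [Fintype ι] {X : ι → Ω → Bool}
    (hX : iIndepFun X μ) {p : ℝ≥0∞} (hp : ∀ j, μ {ω | X j ω = false} ≤ p) :
    μ {ω | ∀ j, X j ω = false} ≤ p ^ Fintype.card ι := by
  have hinter : {ω | ∀ j, X j ω = false} = ⋂ j, X j ⁻¹' {false} := by ext; simp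
  rw [hinter, hX.meas_iInter fun j => ⟨{false}, trivial, rfl⟩, ← Finset.card_univ,
    ← Finset.prod_const]
  exact Finset.prod_le_prod' fun j _ => hp j

lemma measure_exists_forall_eq_false_le [IsProbabilityMeasure μ] [Fintype ι] [Fintype κ]
    {W : κ → ι → Ω → Bool} (hmeas : ∀ i j, Measurable (W i j))
    (hindep : ∀ i, iIndepFun (W i) μ) {q : ℝ≥0∞} (hq : ∀ i j, q ≤ μ {ω | W i j ω = true}) :
    μ {ω | ∃ i, ∀ j, W i j ω = false} ≤ Fintype.card κ * (1 - q) ^ Fintype.card ι := by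
  have hunion : {ω | ∃ i, ∀ j, W i j ω = false} = ⋃ i, {ω | ∀ j, W i j ω = false} := by
    ext; simp
  calc μ {ω | ∃ i, ∀ j, W i j ω = false}
      ≤ ∑ i, μ {ω | ∀ j, W i j ω = false} := hunion ▸ measure_iUnion_fintype_le μ _
    _ ≤ ∑ _i : κ, (1 - q) ^ Fintype.card ι := Finset.sum_le_sum fun i _ =>
        (hindep i).measure_forall_eq_false_le_pow fun j =>
          measure_eq_false_le_one_sub (hmeas i j) (hq i j)
    _ = Fintype.card κ * (1 - q) ^ Fintype.card ι := by simp

lemma toReal_measure_exists_forall_eq_false_le [IsProbabilityMeasure μ] [Fintype ι]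
    [Fintype κ] {W : κ → ι → Ω → Bool} (hmeas : ∀ i j, Measurable (W i j))
    (hindep : ∀ i, iIndepFun (W i) μ) {q : ℝ} (hq0 : 0 ≤ q) (hq1 : q ≤ 1)
    (hq : ∀ i j, ENNReal.ofReal q ≤ μ {ω | W i j ω = true}) :
    (μ {ω | ∃ i, ∀ j, W i j ω = false}).toReal
      ≤ Fintype.card κ * (1 - q) ^ Fintype.card ι := by
  have hbound := measure_exists_forall_eq_false_le hmeas hindep hq
  rw [← ENNReal.ofReal_one, ← ENNReal.ofReal_sub 1 hq0, ← ENNReal.ofReal_pow (by linarith)]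
    at hbound
  refine (ENNReal.toReal_mono (by simp [ENNReal.mul_eq_top]) hbound).trans_eq ?_
  rw [ENNReal.toReal_mul, ENNReal.toReal_ofReal (by bound)]
  simp

end ProbabilityTheory

lemma one_sub_upload_prob_eq {ρ : ℝ} (hρ : ρ ≠ 0) (γ : ℝ) :
    1 - 10 / ρ * (1 - γ) = (ρ - 10) / ρ + 10 * γ / ρ := by
  field_simp
  ring

lemma le_natCeil_sub_one_div_three {n : ℕ} (hn : 1700 ≤ n) : 567 ≤ ⌈((n : ℝ) - 1) / 3⌉₊ := by
  have hn' : (1700 : ℝ) ≤ n := by exact_mod_cast hn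
  exact Nat.add_one_le_ceil_iff.mpr (by push_cast; linarith)

lemma mul_pow_lt_two_pow_neg_thirty : (45 : ℝ) * (43 / 45) ^ 567 < 2 ^ (-30 : ℤ) := by
  -- `567 = 189 * 3` keeps every power below `norm_num`'s evaluation threshold.
  have h189 : (43 / 45 : ℝ) ^ 189 < 1 / 4000 := by norm_num
  calc (45 : ℝ) * (43 / 45) ^ 567 = 45 * ((43 / 45) ^ 189) ^ 3 := by rw [← pow_mul]
    _ < 45 * (1 / 4000) ^ 3 := by gcongr
    _ < 2 ^ (-30 : ℤ) := by norm_num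

/-- Second re-upload step.  At least `⌈(n-1)/3⌉` good citizens hold all `ρ` pools, and
each uploads 10 uniformly random pools it holds to one uniformly random politician, a
fraction `γ` of which are corrupt; so citizen `j`'s upload delivers pool `i` to an
honest politician (`W i j ω = true`) with probability at least `(10/ρ)(1-γ)`,
independently across citizens.  Then the probability that some pool among the `ρ`
pools is not uploaded to any honest politician is at most
`ρ·((ρ-10)/ρ + 10γ/ρ)^{⌈(n-1)/3⌉}`, and for `ρ = 45`, `γ = 0.8`, `n ≥ 1700` this
bound is less than `2^{-30}`. -/
theorem second_reupload_bound
    {Ω : Type*} [MeasurableSpace Ω] (μ : Measure Ω) [IsProbabilityMeasure μ]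
    (ρ n : ℕ) (hρ : 10 ≤ ρ) (γ : ℝ) (hγ0 : 0 ≤ γ) (hγ1 : γ < 1)
    (W : Fin ρ → Fin (⌈((n : ℝ) - 1) / 3⌉₊) → Ω → Bool)
    (hmeas : ∀ i j, Measurable (W i j))
    (hindep : ∀ i, iIndepFun (W i) μ)
    (hupload : ∀ i j,
      ENNReal.ofReal ((10 / (ρ : ℝ)) * (1 - γ)) ≤ μ {ω | W i j ω = true}) :
    (μ {ω | ∃ i, ∀ j, W i j ω = false}).toReal
        ≤ (ρ : ℝ) * ((((ρ : ℝ) - 10) / ρ + 10 * γ / ρ) ^ (⌈((n : ℝ) - 1) / 3⌉₊)) ∧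
    (ρ = 45 → γ = 0.8 → 1700 ≤ n →
      (ρ : ℝ) * ((((ρ : ℝ) - 10) / ρ + 10 * γ / ρ) ^ (⌈((n : ℝ) - 1) / 3⌉₊))
        < (2 : ℝ) ^ (-(30 : ℤ))) := by
  have hρR : (10 : ℝ) ≤ ρ := by exact_mod_cast hρ
  have hq1 : 10 / (ρ : ℝ) * (1 - γ) ≤ 1 :=
    mul_le_one₀ (div_le_one_of_le₀ hρR (by positivity)) (by linarith) (by linarith)
  constructor
  · have hbound := toReal_measure_exists_forall_eq_false_le hmeas hindep
      (mul_nonneg (by positivity) (by linarith)) hq1 hupload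
    rw [one_sub_upload_prob_eq (by positivity)] at hbound
    simpa using hbound
  · rintro rfl rfl hn
    have hbase : (((45 : ℕ) : ℝ) - 10) / (45 : ℕ) + 10 * 0.8 / (45 : ℕ) = 43 / 45 := by norm_num
    rw [hbase, Nat.cast_ofNat]
    calc (45 : ℝ) * (43 / 45) ^ ⌈((n : ℝ) - 1) / 3⌉₊ ≤ 45 * (43 / 45) ^ 567 := by
          gcongr 45 * ?_
          exact pow_le_pow_of_le_one (by norm_num) (by norm_num) (le_natCeil_sub_one_div_three hn)
      _ < 2 ^ (-30 : ℤ) := mul_pow_lt_two_pow_neg_thirty
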